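/- Let f ∈ ℝ[X₁,…,Xₙ] be a polynomial with f(0) = 0 and ∇f(0) = 0. Suppose 𝒭 > 0 satisfies Condition 1, R is an isolation radius of 0, and R < 𝒭. Then 0 is a local minimizer of f if and only if f(x) > 0 for every x ∈ Γ_ℝ(f) ∩ S_R. -/

import Mathlib

/-!
For `x ∈ Γ` write `∇f(x) = λ x`. Inside `B_R` the multiplier `λ` vanishes only at `0` (otherwise
`x` would be critical), so it has constant sign on every connected component of
`Γ ∩ {η ≤ ‖x‖ ≤ R}`. Condition 1 lets one move from any point of such a component towards the
origin without leaving it, and along the way `f` changes with the sign of `-λ`.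

`(⇐)`: a minimiser of `f` on `B_R` is either interior, hence critical, hence `0`; or it lies on
`S_R`, where the Lagrange multiplier rule puts it in `Γ`, so that `f > 0 = f(0)` there.

`(⇒)`: near `0` we have `f > 0` off `0`; pick `η < δ` and `τ` with `f < τ` on `B_η` and
`f ≥ τ` on `S_δ`. If `f(u) ≤ 0` for some `u ∈ Γ ∩ S_R`, let `C` be the component of `u`. If
`λ > 0` on `C`, the minimum of `f` on `C` is attained on `S_η`, where `f > 0 ≥ f(u)`. If `λ < 0`,
the maximum of `f` on `C` is attained on `S_η`, where `f < τ`, yet `C` meets `S_δ`, where `f ≥ τ`.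
-/

open MvPolynomial Metric Set

noncomputable section

/-- The gradient of a real polynomial `f`, as a map on `ℝⁿ`. -/
def grad {n : ℕ} (f : MvPolynomial (Fin n) ℝ) (x : EuclideanSpace ℝ (Fin n)) :
    EuclideanSpace ℝ (Fin n) :=
  WithLp.toLp 2 (fun i => eval (fun j => x j) (pderiv i f))

/-- Evaluation of a polynomial as a function on `ℝⁿ`. -/
def evalP {n : ℕ} (f : MvPolynomial (Fin n) ℝ) (x : EuclideanSpace ℝ (Fin n)) : ℝ :=
  eval (fun j => x j) f

/-- The tangency variety `Γ_ℝ(f) = {x | ∃ λ, ∇f(x) = λ x}`. -/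
def Gamma {n : ℕ} (f : MvPolynomial (Fin n) ℝ) : Set (EuclideanSpace ℝ (Fin n)) :=
  {x | ∃ l : ℝ, grad f x = l • x}

/-- The set of real critical points `Crit_ℝ(f) = {x | ∇f(x) = 0}`. -/
def Crit {n : ℕ} (f : MvPolynomial (Fin n) ℝ) : Set (EuclideanSpace ℝ (Fin n)) :=
  {x | grad f x = 0}

/-- Condition 1 for the radius `sR`: for every nonzero `u ∈ Γ_ℝ(f)` with `‖u‖ < sR`,
there exist a neighborhood `O ⊆ B_sR` of `u`, reals `a < t̄ < b` and a differentiable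
map `φ : (a,b) → ℝⁿ` with `φ((a,b)) = Γ_ℝ(f) ∩ O`, `φ(t̄) = u`, and the derivative of
`t ↦ Σᵢ φᵢ(t)² = ‖φ(t)‖²` at `t̄` nonzero. -/
def Cond1 {n : ℕ} (f : MvPolynomial (Fin n) ℝ) (sR : ℝ) : Prop :=
  ∀ u ∈ Gamma f, u ≠ 0 → ‖u‖ < sR →
    ∃ (O : Set (EuclideanSpace ℝ (Fin n))) (a b tb : ℝ)
      (φ : ℝ → EuclideanSpace ℝ (Fin n)),
      O ∈ nhds u ∧ O ⊆ closedBall (0 : EuclideanSpace ℝ (Fin n)) sR ∧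
      a < tb ∧ tb < b ∧
      (∀ t ∈ Ioo a b, DifferentiableAt ℝ φ t) ∧
      φ '' Ioo a b = Gamma f ∩ O ∧ φ tb = u ∧
      deriv (fun t => ‖φ t‖ ^ 2) tb ≠ 0

open Filter Topology
open scoped RealInnerProductSpace

theorem HasDerivAt.eventually_nhdsNE_mul_sub_pos {g h : ℝ → ℝ} {g' h' t₀ : ℝ}
    (hg : HasDerivAt g g' t₀) (hh : HasDerivAt h h' t₀) (hpos : 0 < g' * h') :
    ∀ᶠ t in 𝓝[≠] t₀, 0 < (g t - g t₀) * (h t - h t₀) := by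
  have hslope := (hasDerivAt_iff_tendsto_slope.1 hg).mul (hasDerivAt_iff_tendsto_slope.1 hh)
  filter_upwards [hslope.eventually (lt_mem_nhds hpos), self_mem_nhdsWithin] with t ht hne
  have hsq : 0 < (t - t₀) ^ 2 := by have := sub_ne_zero.2 hne; positivity
  calc 0 < slope g t₀ t * slope h t₀ t * (t - t₀) ^ 2 := mul_pos ht hsq
    _ = (g t - g t₀) * (h t - h t₀) := by
      rw [slope_def_field, slope_def_field]
      field_simp [sub_ne_zero.2 hne]

theorem HasDerivAt.exists_forall_mem_uIcc_lt {h : ℝ → ℝ} {d t₀ : ℝ} (hh : HasDerivAt h d t₀)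
    (hd : d ≠ 0) {P : ℝ → Prop} (hP : ∀ᶠ t in 𝓝[≠] t₀, P t) :
    ∃ t₁ ≠ t₀, ∀ s ∈ uIcc t₀ t₁, s ≠ t₀ → P s ∧ h s < h t₀ := by
  -- comparing `h` with `t ↦ d * t`: `h` drops exactly on the side where `d * (t - t₀) < 0`
  have hside := hP.and <| ((hasDerivAt_id t₀).const_mul d).eventually_nhdsNE_mul_sub_pos hh
    (by simpa using mul_self_pos.2 hd)
  rcases hd.lt_or_gt with hneg | hpos
  · obtain ⟨t₁, ht₁, hsub⟩ := mem_nhdsGT_iff_exists_Ioc_subset.1 (nhdsGT_le_nhdsNE t₀ hside)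
    refine ⟨t₁, ht₁.ne', fun s hs hne => ?_⟩
    rw [uIcc_of_le ht₁.le] at hs
    obtain ⟨hPs, hprod⟩ := hsub ⟨lt_of_le_of_ne hs.1 hne.symm, hs.2⟩
    simp only [id, ← mul_sub] at hprod
    exact ⟨hPs, sub_neg.1 <| neg_of_mul_pos_right hprod <|
      mul_nonpos_of_nonpos_of_nonneg hneg.le (sub_nonneg.2 hs.1)⟩
  · obtain ⟨t₁, ht₁, hsub⟩ := mem_nhdsLT_iff_exists_Ico_subset.1 (nhdsLT_le_nhdsNE t₀ hside)
    refine ⟨t₁, ht₁.ne, fun s hs hne => ?_⟩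
    rw [uIcc_of_ge ht₁.le] at hs
    obtain ⟨hPs, hprod⟩ := hsub ⟨hs.1, lt_of_le_of_ne hs.2 hne⟩
    simp only [id, ← mul_sub] at hprod
    exact ⟨hPs, sub_neg.1 <| neg_of_mul_pos_right hprod <|
      mul_nonpos_of_nonneg_of_nonpos hpos.le (sub_nonpos.2 hs.2)⟩

theorem IsPreconnected.forall_pos_of_pos {X : Type*} [TopologicalSpace X] {s : Set X}
    (hs : IsPreconnected s) {g : X → ℝ} (hg : ContinuousOn g s) (hne : ∀ x ∈ s, g x ≠ 0)
    {a : X} (ha : a ∈ s) (hpos : 0 < g a) : ∀ x ∈ s, 0 < g x := by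
  intro x hx
  by_contra! hle
  obtain ⟨z, hz, hz0⟩ := hs.intermediate_value hx ha hg ⟨hle, hpos.le⟩
  exact hne z hz hz0

theorem IsClosed.connectedComponentIn {X : Type*} [TopologicalSpace X] {F : Set X}
    (hF : IsClosed F) (x : X) : IsClosed (connectedComponentIn F x) := by
  by_cases hx : x ∈ F
  · exact isClosed_of_closure_subset <|
      isPreconnected_connectedComponentIn.closure.subset_connectedComponentIn
        (subset_closure (mem_connectedComponentIn hx))
        (closure_minimal (connectedComponentIn_subset F x) hF)
  · rw [connectedComponentIn_eq_empty hx]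
    exact isClosed_empty

theorem IsCompact.exists_isMinOn_norm_le {E : Type*} [SeminormedAddCommGroup E] {C : Set E}
    (hC : IsCompact C) (hne : C.Nonempty) {g : E → ℝ} (hg : ContinuousOn g C) {η : ℝ}
    (hdescent : ∀ y ∈ C, η < ‖y‖ → ∃ z ∈ C, g z < g y) :
    ∃ y ∈ C, ‖y‖ ≤ η ∧ IsMinOn g C y := by
  obtain ⟨y, hy, hmin⟩ := hC.exists_isMinOn hne hg
  refine ⟨y, hy, not_lt.1 fun hη => ?_, hmin⟩
  obtain ⟨z, hz, hlt⟩ := hdescent y hy hη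
  exact (hmin hz).not_gt hlt

theorem exists_radii_of_eventually_pos {E : Type*} [NormedAddCommGroup E] [NormedSpace ℝ E]
    [ProperSpace E] [Nontrivial E] {g : E → ℝ} (hg : Continuous g) (hg0 : g 0 = 0)
    (hpos : ∀ᶠ x in 𝓝[≠] 0, 0 < g x) {R : ℝ} (hR : 0 < R) :
    ∃ η δ τ : ℝ, 0 < η ∧ η < δ ∧ δ < R ∧ (∀ x, x ≠ 0 → ‖x‖ ≤ η → 0 < g x) ∧
      (∀ x, ‖x‖ ≤ η → g x < τ) ∧ ∀ x, ‖x‖ = δ → τ ≤ g x := by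
  obtain ⟨r, hr, hposr⟩ := Metric.eventually_nhds_iff_ball.1 (eventually_nhdsWithin_iff.1 hpos)
  obtain ⟨δ, hδ, hδrR⟩ := exists_between (lt_min hr hR)
  obtain ⟨hδr, hδR⟩ := lt_min_iff.1 hδrR
  obtain ⟨m, hm, hmmin⟩ := (isCompact_sphere (0 : E) δ).exists_isMinOn
    (NormedSpace.sphere_nonempty.2 hδ.le) hg.continuousOn
  have hτ : 0 < g m := hposr m (sphere_subset_closedBall.trans (closedBall_subset_ball hδr) hm)
    (norm_ne_zero_iff.1 ((mem_sphere_zero_iff_norm.1 hm).symm ▸ hδ.ne'))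
  obtain ⟨ε, hε, hsmall⟩ := Metric.nhds_basis_closedBall.eventually_iff.1 <|
    hg.continuousAt.eventually (gt_mem_nhds (hg0.symm ▸ hτ))
  obtain ⟨η, hη, hηεδ⟩ := exists_between (lt_min hε hδ)
  obtain ⟨hηε, hηδ⟩ := lt_min_iff.1 hηεδ
  exact ⟨η, δ, g m, hη, hηδ, hδR,
    fun x hx0 hx => hposr x (mem_ball_zero_iff.2 (by linarith)) hx0,
    fun x hx => hsmall (mem_closedBall_zero_iff.2 (hx.trans hηε.le)),
    fun x hx => hmmin (mem_sphere_zero_iff_norm.2 hx)⟩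

section

variable {n : ℕ}

theorem grad_C (a : ℝ) (x : EuclideanSpace ℝ (Fin n)) : grad (C a) x = 0 := by
  ext i; simp [grad]

theorem grad_add (p q : MvPolynomial (Fin n) ℝ) (x : EuclideanSpace ℝ (Fin n)) :
    grad (p + q) x = grad p x + grad q x := by
  ext i; simp [grad]

theorem grad_mul_X (p : MvPolynomial (Fin n) ℝ) (i : Fin n) (x : EuclideanSpace ℝ (Fin n)) :
    grad (p * X i) x = x i • grad p x + evalP p x • EuclideanSpace.single i 1 := by
  ext j
  rcases eq_or_ne i j with rfl | hij <;> simp [grad, evalP, Pi.single_apply, *]; ring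

theorem hasStrictFDerivAt_evalP (f : MvPolynomial (Fin n) ℝ) (x : EuclideanSpace ℝ (Fin n)) :
    HasStrictFDerivAt (evalP f) (innerSL ℝ (grad f x)) x := by
  induction f using MvPolynomial.induction_on with
  | C a =>
    rw [grad_C, map_zero]
    exact (hasStrictFDerivAt_const (𝕜 := ℝ) a x).congr_of_eventuallyEq
      (.of_forall fun _ => (eval_C a).symm)
  | add p q hp hq =>
    rw [grad_add, map_add]
    exact (hp.add hq).congr_of_eventuallyEq (.of_forall fun _ => (eval_add ..).symm)
  | mul_X p i hp =>
    refine ((hp.mul (EuclideanSpace.proj (𝕜 := ℝ) i).hasStrictFDerivAt).congr_of_eventuallyEq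
      (.of_forall fun y => ?_)).congr_fderiv ?_
    · simp [evalP]
    · ext v
      simp [grad_mul_X, EuclideanSpace.inner_single_left]
      ring

theorem hasFDerivAt_evalP (f : MvPolynomial (Fin n) ℝ) (x : EuclideanSpace ℝ (Fin n)) :
    HasFDerivAt (evalP f) (innerSL ℝ (grad f x)) x :=
  (hasStrictFDerivAt_evalP f x).hasFDerivAt

theorem continuous_evalP (f : MvPolynomial (Fin n) ℝ) : Continuous (evalP f) :=
  (MvPolynomial.continuous_eval f).comp (PiLp.continuous_ofLp 2 _)

theorem continuous_grad (f : MvPolynomial (Fin n) ℝ) : Continuous (grad f) :=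
  (PiLp.continuous_toLp 2 _).comp <| continuous_pi fun i => continuous_evalP (pderiv i f)

theorem HasDerivAt.evalP_comp (f : MvPolynomial (Fin n) ℝ) {φ : ℝ → EuclideanSpace ℝ (Fin n)}
    {v : EuclideanSpace ℝ (Fin n)} {t : ℝ} (hφ : HasDerivAt φ v t) :
    HasDerivAt (fun s => evalP f (φ s)) ⟪grad f (φ t), v⟫ t :=
  (hasFDerivAt_evalP f (φ t)).comp_hasDerivAt t hφ

theorem grad_eq_zero_of_isLocalMin {f : MvPolynomial (Fin n) ℝ} {x : EuclideanSpace ℝ (Fin n)}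
    (h : IsLocalMin (evalP f) x) : grad f x = 0 := by
  simpa using congr($(h.hasFDerivAt_eq_zero (hasFDerivAt_evalP f x)) (grad f x))

theorem mem_Gamma_of_isLocalExtrOn_sphere {f : MvPolynomial (Fin n) ℝ}
    {w : EuclideanSpace ℝ (Fin n)} (hw : w ≠ 0)
    (hextr : IsLocalExtrOn (evalP f) (sphere 0 ‖w‖) w) : w ∈ Gamma f := by
  have hsphere : {x | ‖x‖ ^ 2 = ‖w‖ ^ 2} = sphere (0 : EuclideanSpace ℝ (Fin n)) ‖w‖ := by
    ext x; simp
  rw [← hsphere] at hextr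
  obtain ⟨a, b, hab, hsum⟩ := hextr.exists_multipliers_of_hasStrictFDerivAt_1d
    (hasStrictFDerivAt_norm_sq w) (hasStrictFDerivAt_evalP f w)
  have hlin : (2 * a) • w + b • grad f w = 0 := by
    rw [← norm_eq_zero, ← innerSL_apply_norm ℝ, map_add, map_smul, map_smul, norm_eq_zero,
      ← hsum, mul_comm, mul_smul, ofNat_smul_eq_nsmul]
  have hb : b ≠ 0 := by
    rintro rfl
    simp_all
  refine ⟨-(2 * a) / b, ?_⟩
  rw [← inv_smul_smul₀ hb (grad f w), eq_neg_of_add_eq_zero_right hlin, smul_neg, smul_smul,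
    ← neg_smul, neg_mul_eq_mul_neg, div_eq_inv_mul]

theorem Gamma_eq_of_grad_zero {f : MvPolynomial (Fin n) ℝ} (h0 : grad f 0 = 0) :
    Gamma f = {x | ‖x‖ ^ 2 • grad f x = ⟪grad f x, x⟫ • x} := by
  ext x
  constructor
  · rintro ⟨l, hl⟩
    show ‖x‖ ^ 2 • grad f x = ⟪grad f x, x⟫ • x
    simp only [hl, real_inner_smul_left, real_inner_self_eq_norm_sq, smul_smul, mul_comm]
  · intro (hx : ‖x‖ ^ 2 • grad f x = ⟪grad f x, x⟫ • x)
    rcases eq_or_ne x 0 with rfl | hx0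
    · exact ⟨0, by simp [h0]⟩
    refine ⟨⟪grad f x, x⟫ / ‖x‖ ^ 2, ?_⟩
    rw [div_eq_inv_mul, mul_smul, ← hx, inv_smul_smul₀ (by positivity)]

theorem isClosed_Gamma {f : MvPolynomial (Fin n) ℝ} (h0 : grad f 0 = 0) :
    IsClosed (Gamma f) := by
  rw [Gamma_eq_of_grad_zero h0]
  have := continuous_grad f
  exact isClosed_eq (by fun_prop) (by fun_prop)

theorem inner_grad_self_ne_zero {f : MvPolynomial (Fin n) ℝ} {x : EuclideanSpace ℝ (Fin n)}
    (hx : x ∈ Gamma f) (hcrit : grad f x ≠ 0) : ⟪grad f x, x⟫ ≠ 0 := by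
  obtain ⟨l, hl⟩ := hx
  have hl0 : l ≠ 0 := by rintro rfl; simp_all
  have hx0 : x ≠ 0 := by rintro rfl; simp_all
  rw [hl, real_inner_smul_left, real_inner_self_eq_norm_sq]
  positivity

/-- Along the curve `φ` of Condition 1 through `y`, where `∇f(y) = λ y`, the derivatives of
`f ∘ φ` and `‖φ‖²` are `λ ⟪y, φ'⟫` and `2 ⟪y, φ'⟫`. -/
theorem Cond1.exists_isPreconnected_inward {f : MvPolynomial (Fin n) ℝ} {sR : ℝ}
    (hcond : Cond1 f sR) {y : EuclideanSpace ℝ (Fin n)} (hy : y ∈ Gamma f) (hysR : ‖y‖ < sR)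
    (hLam : ⟪grad f y, y⟫ ≠ 0) {η : ℝ} (hη : η < ‖y‖) :
    ∃ S, IsPreconnected S ∧ y ∈ S ∧ S ⊆ Gamma f ∩ {x | η < ‖x‖ ∧ ‖x‖ ≤ ‖y‖} ∧
      ∃ z ∈ S, ‖z‖ < ‖y‖ ∧ ⟪grad f y, y⟫ * (evalP f z - evalP f y) < 0 := by
  have hy0 : y ≠ 0 := by rintro rfl; simp at hLam
  obtain ⟨O, a, b, tb, φ, -, -, hatb, htbb, hφdiff, hφim, hφtb, hderiv⟩ := hcond y hy hy0 hysR
  obtain ⟨l, hl⟩ := hy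
  have hl0 : l ≠ 0 := by rintro rfl; simp [hl] at hLam
  set v := deriv φ tb
  have hφ : HasDerivAt φ v tb := (hφdiff tb ⟨hatb, htbb⟩).hasDerivAt
  have hh : HasDerivAt (fun t => ‖φ t‖ ^ 2) (2 * ⟪y, v⟫) tb := hφtb ▸ hφ.norm_sq
  have hg : HasDerivAt (fun t => ⟪grad f y, y⟫ * evalP f (φ t))
      (⟪grad f y, y⟫ * ⟪grad f y, v⟫) tb := by
    rw [← hφtb]; exact (hφ.evalP_comp f).const_mul _
  have hyv : ⟪y, v⟫ ≠ 0 := fun h => hderiv (by rw [hh.deriv, h, mul_zero])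
  have hprod : 0 < ⟪grad f y, y⟫ * ⟪grad f y, v⟫ * (2 * ⟪y, v⟫) := by
    have : ⟪grad f y, y⟫ * ⟪grad f y, v⟫ * (2 * ⟪y, v⟫) = 2 * ‖y‖ ^ 2 * (l * ⟪y, v⟫) ^ 2 := by
      rw [hl, real_inner_smul_left, real_inner_smul_left, real_inner_self_eq_norm_sq]; ring
    rw [this]
    have := mul_ne_zero hl0 hyv
    positivity
  have hnear : ∀ᶠ t in 𝓝 tb, φ t ∈ Gamma f ∧ ContinuousAt φ t ∧ η < ‖φ t‖ := by
    filter_upwards [Ioo_mem_nhds hatb htbb,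
      hφ.continuousAt.norm.eventually (lt_mem_nhds (hφtb ▸ hη))] with t ht htη
    exact ⟨(hφim ▸ mem_image_of_mem φ ht).1, (hφdiff t ht).continuousAt, htη⟩
  obtain ⟨t₁, ht₁, hseg⟩ := hh.exists_forall_mem_uIcc_lt (mul_ne_zero two_ne_zero hyv)
    ((hnear.filter_mono nhdsWithin_le_nhds).and (hg.eventually_nhdsNE_mul_sub_pos hh hprod))
  have hmem : ∀ s ∈ uIcc tb t₁,
      φ s ∈ Gamma f ∩ {x | η < ‖x‖ ∧ ‖x‖ ≤ ‖y‖} ∧ ContinuousAt φ s := by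
    intro s hs
    rcases eq_or_ne s tb with rfl | hne
    · rw [hφtb]; exact ⟨⟨⟨l, hl⟩, hη, le_rfl⟩, hφ.continuousAt⟩
    · obtain ⟨⟨⟨hΓ, hcont, hηs⟩, -⟩, hlt⟩ := hseg s hs hne
      rw [hφtb] at hlt
      exact ⟨⟨hΓ, hηs, (lt_of_pow_lt_pow_left₀ 2 (norm_nonneg y) hlt).le⟩, hcont⟩
  refine ⟨φ '' uIcc tb t₁,
    isPreconnected_uIcc.image φ fun s hs => (hmem s hs).2.continuousWithinAt,
    ⟨tb, left_mem_uIcc, hφtb⟩, image_subset_iff.2 fun s hs => (hmem s hs).1,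
    φ t₁, mem_image_of_mem φ right_mem_uIcc, ?_⟩
  obtain ⟨⟨-, hdecr⟩, hlt⟩ := hseg t₁ right_mem_uIcc ht₁
  rw [hφtb] at hlt hdecr
  rw [mul_sub]
  exact ⟨lt_of_pow_lt_pow_left₀ 2 (norm_nonneg y) hlt,
    neg_of_mul_pos_left hdecr (sub_neg.2 hlt).le⟩

theorem isCompact_connectedComponentIn_Gamma {f : MvPolynomial (Fin n) ℝ} (h0 : grad f 0 = 0)
    {R η : ℝ} {u : EuclideanSpace ℝ (Fin n)} :
    IsCompact (connectedComponentIn (Gamma f ∩ (closedBall 0 R \ ball 0 η)) u) :=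
  (isCompact_closedBall 0 R).of_isClosed_subset
    (((isClosed_Gamma h0).inter (isClosed_closedBall.sdiff isOpen_ball)).connectedComponentIn u)
    ((connectedComponentIn_subset _ u).trans (inter_subset_right.trans sdiff_subset))

theorem inner_grad_self_ne_zero_of_mem_annulus {f : MvPolynomial (Fin n) ℝ} {R η : ℝ}
    (hη : 0 < η) (hiso : ∀ x, ‖x‖ ≤ R → grad f x = 0 → x = 0) {x : EuclideanSpace ℝ (Fin n)}
    (hx : x ∈ Gamma f ∩ (closedBall 0 R \ ball 0 η)) : ⟪grad f x, x⟫ ≠ 0 := by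
  obtain ⟨hxΓ, hxR, hxη⟩ := hx
  refine inner_grad_self_ne_zero hxΓ fun hcrit => hxη ?_
  rw [hiso x (mem_closedBall_zero_iff.1 hxR) hcrit]
  exact mem_ball_self hη

theorem Cond1.exists_mem_connectedComponentIn_inward {f : MvPolynomial (Fin n) ℝ} {sR R η : ℝ}
    (hcond : Cond1 f sR) (hRlt : R < sR) {u y : EuclideanSpace ℝ (Fin n)}
    (hy : y ∈ connectedComponentIn (Gamma f ∩ (closedBall 0 R \ ball 0 η)) u)
    (hLam : ⟪grad f y, y⟫ ≠ 0) (hη : η < ‖y‖) :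
    ∃ z ∈ connectedComponentIn (Gamma f ∩ (closedBall 0 R \ ball 0 η)) u,
      ‖z‖ < ‖y‖ ∧ ⟪grad f y, y⟫ * (evalP f z - evalP f y) < 0 := by
  obtain ⟨hyΓ, hyR, -⟩ := connectedComponentIn_subset _ _ hy
  rw [mem_closedBall_zero_iff] at hyR
  obtain ⟨S, hS, hyS, hSsub, z, hzS, hz⟩ :=
    hcond.exists_isPreconnected_inward hyΓ (hyR.trans_lt hRlt) hLam hη
  refine ⟨z, ?_, hz⟩
  rw [connectedComponentIn_eq hy]
  refine hS.subset_connectedComponentIn hyS (hSsub.trans fun x hx => ?_) hzS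
  exact ⟨hx.1, mem_closedBall_zero_iff.2 (hx.2.2.trans hyR),
    fun h => (mem_ball_zero_iff.1 h).not_gt hx.2.1⟩

theorem isLocalMin_of_forall_Gamma_sphere_pos {f : MvPolynomial (Fin n) ℝ} {R : ℝ}
    (hf0 : evalP f 0 = 0) (hR : 0 < R) (hiso : ∀ x, ‖x‖ ≤ R → grad f x = 0 → x = 0)
    (hpos : ∀ x ∈ Gamma f ∩ sphere 0 R, 0 < evalP f x) : IsLocalMin (evalP f) 0 := by
  obtain ⟨w, hwR, hwmin⟩ := (isCompact_closedBall (0 : EuclideanSpace ℝ (Fin n)) R).exists_isMinOn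
    (nonempty_closedBall.2 hR.le) (continuous_evalP f).continuousOn
  rw [mem_closedBall_zero_iff] at hwR
  suffices hw0 : w = 0 by subst hw0; exact hwmin.isLocalMin (closedBall_mem_nhds 0 hR)
  rcases hwR.lt_or_eq with hlt | heq
  · refine hiso w hwR (grad_eq_zero_of_isLocalMin (hwmin.isLocalMin ?_))
    exact mem_of_superset (isOpen_ball.mem_nhds (mem_ball_zero_iff.2 hlt)) ball_subset_closedBall
  · have hw0 : w ≠ 0 := by rintro rfl; simp only [norm_zero] at heq; exact hR.ne heq
    have hΓ : w ∈ Gamma f := mem_Gamma_of_isLocalExtrOn_sphere hw0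
      (heq ▸ hwmin.on_subset sphere_subset_closedBall).localize.isExtr
    have hfw : evalP f w ≤ evalP f 0 := hwmin (mem_closedBall_self hR.le)
    linarith [hpos w ⟨hΓ, mem_sphere_zero_iff_norm.2 heq⟩]

theorem eventually_nhdsNE_pos_of_isLocalMin {f : MvPolynomial (Fin n) ℝ} {R : ℝ}
    (hf0 : evalP f 0 = 0) (hR : 0 < R) (hiso : ∀ x, ‖x‖ ≤ R → grad f x = 0 → x = 0)
    (hmin : IsLocalMin (evalP f) 0) : ∀ᶠ x in 𝓝[≠] 0, 0 < evalP f x := by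
  obtain ⟨ε, hε, hball⟩ := Metric.eventually_nhds_iff_ball.1 hmin
  rw [eventually_nhdsWithin_iff, Metric.eventually_nhds_iff_ball]
  refine ⟨min ε R, lt_min hε hR, fun x hx hx0 => ?_⟩
  have hxε : x ∈ ball 0 ε := ball_subset_ball (min_le_left _ _) hx
  -- a zero of `f` where `f ≥ 0` is a local minimum, hence a critical point
  refine (hf0 ▸ hball x hxε).lt_of_ne fun hfx => hx0 ?_
  refine hiso x ((mem_ball_zero_iff.1 hx).le.trans (min_le_right _ _))
    (grad_eq_zero_of_isLocalMin ?_)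
  filter_upwards [isOpen_ball.mem_nhds hxε] with y hy
  exact hfx ▸ hf0 ▸ hball y hy

theorem forall_Gamma_sphere_pos_of_isLocalMin {f : MvPolynomial (Fin n) ℝ} {sR R : ℝ}
    (hf0 : evalP f 0 = 0) (hcond : Cond1 f sR) (hR : 0 < R) (hRlt : R < sR)
    (hiso : ∀ x, ‖x‖ ≤ R → grad f x = 0 → x = 0) (hmin : IsLocalMin (evalP f) 0) :
    ∀ x ∈ Gamma f ∩ sphere 0 R, 0 < evalP f x := by
  rintro u ⟨huΓ, hu⟩
  rw [mem_sphere_zero_iff_norm] at hu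
  by_contra! hfu
  have : Nontrivial (EuclideanSpace ℝ (Fin n)) :=
    nontrivial_of_ne u 0 (norm_ne_zero_iff.1 (hu ▸ hR.ne'))
  obtain ⟨η, δ, τ, hη, hηδ, hδR, hpos, hlow, hhigh⟩ := exists_radii_of_eventually_pos
    (continuous_evalP f) hf0 (eventually_nhdsNE_pos_of_isLocalMin hf0 hR hiso hmin) hR
  set D := Gamma f ∩ (closedBall (0 : EuclideanSpace ℝ (Fin n)) R \ ball 0 η)
  set C := connectedComponentIn D u
  have hCD : C ⊆ D := connectedComponentIn_subset D u
  have huC : u ∈ C := mem_connectedComponentIn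
    ⟨huΓ, mem_closedBall_zero_iff.2 hu.le, fun h => (mem_ball_zero_iff.1 h).not_ge (by linarith)⟩
  have hC : IsCompact C := isCompact_connectedComponentIn_Gamma (grad_eq_zero_of_isLocalMin hmin)
  have hLam : ∀ x ∈ C, ⟪grad f x, x⟫ ≠ 0 := fun x hx =>
    inner_grad_self_ne_zero_of_mem_annulus hη hiso (hCD hx)
  have hpush := fun y hy => hcond.exists_mem_connectedComponentIn_inward hRlt hy (hLam y hy)
  have hLamC : ContinuousOn (fun x => ⟪grad f x, x⟫) C :=
    ((continuous_grad f).inner continuous_id).continuousOn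
  rcases (hLam u huC).lt_or_gt with hneg | hpos'
  · have hLamneg := isPreconnected_connectedComponentIn.forall_pos_of_pos hLamC.neg
      (fun x hx => neg_ne_zero.2 (hLam x hx)) huC (neg_pos.2 hneg)
    obtain ⟨q, hqC, hqη, -⟩ := hC.exists_isMinOn_norm_le ⟨u, huC⟩ continuous_norm.continuousOn
      fun y hy hηy => (hpush y hy hηy).imp fun z hz => ⟨hz.1, hz.2.1⟩
    obtain ⟨x, hxC, hxδ⟩ := isPreconnected_connectedComponentIn.intermediate_value hqC huC
      continuous_norm.continuousOn ⟨hqη.trans hηδ.le, hu ▸ hδR.le⟩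
    obtain ⟨y, hyC, hyη, hymax⟩ := hC.exists_isMinOn_norm_le ⟨u, huC⟩
      (continuous_evalP f).neg.continuousOn fun y hy hηy => (hpush y hy hηy).imp fun z hz =>
        ⟨hz.1, neg_lt_neg (sub_pos.1 (pos_of_mul_neg_right hz.2.2 (neg_pos.1 (hLamneg y hy)).le))⟩
    have hxy : evalP f x ≤ evalP f y := neg_le_neg_iff.1 (hymax hxC)
    linarith [hhigh x hxδ, hlow y hyη]
  · have hLampos := isPreconnected_connectedComponentIn.forall_pos_of_pos hLamC hLam huC hpos'
    obtain ⟨y, hyC, hyη, hymin⟩ := hC.exists_isMinOn_norm_le ⟨u, huC⟩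
      (continuous_evalP f).continuousOn fun y hy hηy => (hpush y hy hηy).imp fun z hz =>
        ⟨hz.1, sub_neg.1 (neg_of_mul_neg_right hz.2.2 (hLampos y hy).le)⟩
    have hyu : evalP f y ≤ evalP f u := hymin huC
    linarith [hpos y (fun h => (hCD hyC).2.2 (h ▸ mem_ball_self hη)) hyη]

end

theorem stmt14_general (n : ℕ) (f : MvPolynomial (Fin n) ℝ)
    (hf0 : evalP f 0 = 0)
    (sR : ℝ) (hcond : Cond1 f sR) (R : ℝ) (hR : 0 < R)
    (hiso : Crit f ∩ closedBall (0 : EuclideanSpace ℝ (Fin n)) R = {0}) (hRlt : R < sR) :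
    IsLocalMin (evalP f) 0 ↔
      ∀ x ∈ Gamma f ∩ sphere (0 : EuclideanSpace ℝ (Fin n)) R, 0 < evalP f x := by
  have hcrit : ∀ x, ‖x‖ ≤ R → grad f x = 0 → x = 0 := fun x hxR hx =>
    hiso.subset ⟨hx, mem_closedBall_zero_iff.2 hxR⟩
  exact ⟨forall_Gamma_sphere_pos_of_isLocalMin hf0 hcond hR hRlt hcrit,
    isLocalMin_of_forall_Gamma_sphere_pos hf0 hR hcrit⟩

/-- If `sR > 0` satisfies Condition 1, `R` is an isolation radius of `0`, and
`R < sR`, then `0` is a local minimizer of `f` if and only if `f(x) > 0` for every `x ∈ Γ_ℝ(f) ∩ S_R`. -/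
theorem stmt14 (n : ℕ) (f : MvPolynomial (Fin n) ℝ)
    (hf0 : evalP f 0 = 0) (hgrad : grad f 0 = 0)
    (sR : ℝ) (hsR : 0 < sR) (hcond : Cond1 f sR) (R : ℝ) (hR : 0 < R)
    (hiso : Crit f ∩ closedBall (0 : EuclideanSpace ℝ (Fin n)) R = {0}) (hRlt : R < sR) :
    IsLocalMin (evalP f) 0 ↔
      ∀ x ∈ Gamma f ∩ sphere (0 : EuclideanSpace ℝ (Fin n)) R, 0 < evalP f x :=
  stmt14_general n f hf0 sR hcond R hR hiso hRlt
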